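/- arXiv:2410.20797 — 2 statements merged into one kernel-verified Lean document; each statement's English description precedes it below -/
import Mathlib

section
/- Let η(x) be a probability vector over {1,…,c} with unique maximizer y = η*(x), and let Ȳ ⊂ {1,…,c}\{y} with a = argmax_{j∈Ȳ} η^j(x), b = argmax_{j∉{y}∪Ȳ} η^j(x), ∑_{j∈Ȳ} η^j(x) < 1. Define η'^j(x) = η^j(x)/(1 − ∑_{k∈Ȳ} η^k(x)) for j ∉ Ȳ, 0 otherwise. Suppose ε > 0, ε' > 0 satisfy ε' ≤ (η^y(x) − η^b(x))(η^y(x) − η^a(x)) / (8ε(1 − ∑_{j∈Ȳ} η^j(x))) and η^y(x) − η^a(x) ≤ 2ε. Then the reduced posterior has margin η'^y(x) − η'^b(x) ≥ 2ε'; since b is the second-best label of η', the reduced margin over all j ∉ {y} ∪ Ȳ exceeds 2ε'. -/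
/-- The reduced posterior `η'` of the paper, with `s = Ȳ`. -/
noncomputable def condExclude {ι : Type*} [DecidableEq ι] (η : ι → ℝ) (s : Finset ι) (j : ι) : ℝ :=
  if j ∉ s then η j / (1 - ∑ k ∈ s, η k) else 0

section condExclude

variable {ι : Type*} [DecidableEq ι] {η : ι → ℝ} {s : Finset ι} {i j : ι}

theorem condExclude_of_notMem (hj : j ∉ s) :
    condExclude η s j = η j / (1 - ∑ k ∈ s, η k) :=
  if_pos hj

theorem condExclude_sub_condExclude (hi : i ∉ s) (hj : j ∉ s) :
    condExclude η s i - condExclude η s j = (η i - η j) / (1 - ∑ k ∈ s, η k) := by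
  rw [condExclude_of_notMem hi, condExclude_of_notMem hj, sub_div]

theorem condExclude_le_condExclude (hs : ∑ k ∈ s, η k < 1) (hi : i ∉ s) (hj : j ∉ s)
    (h : η i ≤ η j) : condExclude η s i ≤ condExclude η s j := by
  rw [condExclude_of_notMem hi, condExclude_of_notMem hj]
  exact div_le_div_of_nonneg_right h (by linarith)

end condExclude

/-- Since `g / (8 ε) ≤ 1/4`, the hypothesis even gives `4 ε' ≤ d / D`. -/
theorem two_mul_le_div_of_le_mul_div {d g D ε ε' : ℝ} (hd : 0 ≤ d) (hD : 0 < D) (hε : 0 < ε)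
    (hg : g ≤ 2 * ε) (hε' : ε' ≤ d * g / (8 * ε * D)) : 2 * ε' ≤ d / D :=
  calc 2 * ε' ≤ 2 * (d * (2 * ε) / (8 * ε * D)) := by gcongr; exact hε'.trans (by gcongr)
    _ = d / (2 * D) := by field_simp; ring
    _ ≤ d / D := div_le_div_of_nonneg_left hd hD (by linarith)

theorem stmt6_general {c : ℕ} (η : Fin c → ℝ) (y : Fin c) (Ybar : Finset (Fin c))
    (a b : Fin c) (ε ε' : ℝ)
    (hy : ∀ j, j ≠ y → η j < η y) (hyY : y ∉ Ybar)
    (hlt : ∑ j ∈ Ybar, η j < 1)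
    (hby : b ≠ y) (hbY : b ∉ Ybar)
    (hbmax : ∀ j, j ≠ y → j ∉ Ybar → η j ≤ η b)
    (η' : Fin c → ℝ)
    (hdef : ∀ j, η' j = if j ∉ Ybar then η j / (1 - ∑ k ∈ Ybar, η k) else 0)
    (hε : 0 < ε)
    (hε'le : ε' ≤ (η y - η b) * (η y - η a) / (8 * ε * (1 - ∑ j ∈ Ybar, η j)))
    (hagap : η y - η a ≤ 2 * ε) :
    2 * ε' ≤ η' y - η' b ∧ ∀ j, j ≠ y → j ∉ Ybar → 2 * ε' ≤ η' y - η' j := by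
  obtain rfl : η' = condExclude η Ybar := funext hdef
  have hmargin : 2 * ε' ≤ condExclude η Ybar y - condExclude η Ybar b := by
    rw [condExclude_sub_condExclude hyY hbY]
    exact two_mul_le_div_of_le_mul_div (sub_nonneg.mpr (hy b hby).le) (by linarith) hε hagap hε'le
  refine ⟨hmargin, fun j hjy hjY => hmargin.trans ?_⟩
  exact sub_le_sub_left (condExclude_le_condExclude hlt hjY hbY (hbmax j hjy hjY)) _

/-- Key margin-amplification inequality in the proof of Theorem 1: under the assumed
bound on ε', the reduced posterior has margin `η' y - η' b ≥ 2ε'`, and since `b` is the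
second-best label of `η'`, the reduced margin over all `j ∉ {y} ∪ Ybar` is at least 2ε'. -/
theorem stmt6 {c : ℕ} (η : Fin c → ℝ) (y : Fin c) (Ybar : Finset (Fin c))
    (a b : Fin c) (ε ε' : ℝ)
    (hnn : ∀ j, 0 ≤ η j) (hsum : ∑ j, η j = 1)
    (hy : ∀ j, j ≠ y → η j < η y) (hyY : y ∉ Ybar)
    (hlt : ∑ j ∈ Ybar, η j < 1)
    (ha : a ∈ Ybar) (hamax : ∀ j ∈ Ybar, η j ≤ η a)
    (hby : b ≠ y) (hbY : b ∉ Ybar)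
    (hbmax : ∀ j, j ≠ y → j ∉ Ybar → η j ≤ η b)
    (η' : Fin c → ℝ)
    (hdef : ∀ j, η' j = if j ∉ Ybar then η j / (1 - ∑ k ∈ Ybar, η k) else 0)
    (hε : 0 < ε) (hε' : 0 < ε')
    (hε'le : ε' ≤ (η y - η b) * (η y - η a) / (8 * ε * (1 - ∑ j ∈ Ybar, η j)))
    (hagap : η y - η a ≤ 2 * ε) :
    2 * ε' ≤ η' y - η' b ∧ ∀ j, j ≠ y → j ∉ Ybar → 2 * ε' ≤ η' y - η' j :=
  stmt6_general η y Ybar a b ε ε' hy hyY hlt hby hbY hbmax η' hdef hε hε'le hagap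
end

section
/- Let c ≥ 2, let η(x) be a probability vector with unique maximizer y = η*(x), Ȳ ⊂ {1,…,c}\{y} nonempty with ∑_{j∈Ȳ} η^j(x) < 1, a = argmax_{j∈Ȳ} η^j(x), b = argmax_{j∉{y}∪Ȳ} η^j(x). Let η' be the reduced posterior excluding Ȳ, and let φ : X → ℝ^c satisfy |φ^j(x) − η'^j(x)| ≤ ε' for all j, where 0 < ε' < (η^y(x) − η^b(x))(η^y(x) − η^a(x)) / (8ε(1 − ∑_{j∈Ȳ} η^j(x))) and η^y(x) − η^a(x) ≤ 2ε for some ε ∈ (0,1). Then argmax_j φ^j(x) = y; i.e., the auxiliary branch trained without Ȳ recovers the Bayes optimal label pointwise on instances troubled by disturbing labels in Ȳ. -/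
/-!
Removing the labels `Ybar` and renormalising keeps `y` on top: every other class of the reduced
posterior trails `y` by at least `(η y - η b) / (1 - ∑_{Ybar} η)`. The bound on `ε'`, together with
`η y - η a ≤ 2ε`, makes this margin exceed `4ε'`, so a uniform `ε'`-perturbation of the reduced
posterior cannot move its argmax.
-/

noncomputable def reducedPosterior {ι : Type*} [DecidableEq ι] (η : ι → ℝ) (Ybar : Finset ι)
    (j : ι) : ℝ :=
  if j ∉ Ybar then η j / (1 - ∑ k ∈ Ybar, η k) else 0

lemma reducedPosterior_margin {ι : Type*} [DecidableEq ι] {η : ι → ℝ} {Ybar : Finset ι}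
    {y b : ι} (hyY : y ∉ Ybar) (hlt : ∑ k ∈ Ybar, η k < 1) (hb : 0 ≤ η b)
    (hbmax : ∀ j, j ≠ y → j ∉ Ybar → η j ≤ η b) (j : ι) (hj : j ≠ y) :
    (η y - η b) / (1 - ∑ k ∈ Ybar, η k) ≤
      reducedPosterior η Ybar y - reducedPosterior η Ybar j := by
  have hD : 0 < 1 - ∑ k ∈ Ybar, η k := sub_pos.mpr hlt
  by_cases hjY : j ∈ Ybar
  · simp only [reducedPosterior, hyY, hjY, not_true_eq_false, not_false_eq_true, if_true,
      if_false, sub_zero]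
    gcongr
    linarith
  · simp only [reducedPosterior, hyY, hjY, not_false_eq_true, if_true, ← sub_div]
    gcongr
    exact hbmax j hj hjY

lemma four_mul_lt_div_of_lt_mul_div {gb ga ε ε' D : ℝ} (hgb : 0 ≤ gb) (hga : ga ≤ 2 * ε)
    (hε : 0 < ε) (hD : 0 < D) (h : ε' < gb * ga / (8 * ε * D)) : 4 * ε' < gb / D := by
  have hbound : gb * ga / (8 * ε * D) ≤ gb / D / 4 :=
    calc gb * ga / (8 * ε * D) ≤ gb * (2 * ε) / (8 * ε * D) := by gcongr
      _ = gb / D / 4 := by field_simp; ring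
  linarith

lemma lt_of_abs_sub_le_of_two_mul_lt {ι : Type*} {φ ψ : ι → ℝ} {δ : ℝ} {y : ι}
    (happrox : ∀ j, |φ j - ψ j| ≤ δ) (hmargin : ∀ j, j ≠ y → 2 * δ < ψ y - ψ j) :
    ∀ j, j ≠ y → φ j < φ y := by
  intro j hj
  have hy := (abs_le.mp (happrox y)).1
  have hj' := (abs_le.mp (happrox j)).2
  linarith [hmargin j hj]

theorem stmt7_general {c : ℕ} (η : Fin c → ℝ) (y : Fin c) (Ybar : Finset (Fin c))
    (a b : Fin c) (ε ε' : ℝ)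
    (hnn : ∀ j, 0 ≤ η j)
    (hy : ∀ j, j ≠ y → η j < η y) (hyY : y ∉ Ybar)
    (hlt : ∑ j ∈ Ybar, η j < 1)
    (hby : b ≠ y)
    (hbmax : ∀ j, j ≠ y → j ∉ Ybar → η j ≤ η b)
    (η' : Fin c → ℝ)
    (hdef : ∀ j, η' j = if j ∉ Ybar then η j / (1 - ∑ k ∈ Ybar, η k) else 0)
    (hε : 0 < ε) (hε' : 0 < ε')
    (hε'lt : ε' < (η y - η b) * (η y - η a) / (8 * ε * (1 - ∑ j ∈ Ybar, η j)))
    (hagap : η y - η a ≤ 2 * ε)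
    (φ : Fin c → ℝ)
    (happrox : ∀ j, |φ j - η' j| ≤ ε') :
    ∀ j, j ≠ y → φ j < φ y := by
  obtain rfl : η' = reducedPosterior η Ybar := funext hdef
  have hamplified : 4 * ε' < (η y - η b) / (1 - ∑ j ∈ Ybar, η j) :=
    four_mul_lt_div_of_lt_mul_div (sub_nonneg.mpr (hy b hby).le) hagap hε (sub_pos.mpr hlt) hε'lt
  refine lt_of_abs_sub_le_of_two_mul_lt happrox fun j hj => ?_
  linarith [reducedPosterior_margin hyY hlt (hnn b) hbmax j hj]

/-- Pointwise core of Theorem 1: the auxiliary branch φ trained without the disturbing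
labels `Ybar` (uniformly ε'-close to the reduced posterior η') recovers the Bayes
optimal label `y` pointwise. -/
theorem stmt7 {c : ℕ} (hc : 2 ≤ c) (η : Fin c → ℝ) (y : Fin c) (Ybar : Finset (Fin c))
    (a b : Fin c) (ε ε' : ℝ)
    (hnn : ∀ j, 0 ≤ η j) (hsum : ∑ j, η j = 1)
    (hy : ∀ j, j ≠ y → η j < η y) (hyY : y ∉ Ybar) (hne : Ybar.Nonempty)
    (hlt : ∑ j ∈ Ybar, η j < 1)
    (ha : a ∈ Ybar) (hamax : ∀ j ∈ Ybar, η j ≤ η a)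
    (hby : b ≠ y) (hbY : b ∉ Ybar)
    (hbmax : ∀ j, j ≠ y → j ∉ Ybar → η j ≤ η b)
    (η' : Fin c → ℝ)
    (hdef : ∀ j, η' j = if j ∉ Ybar then η j / (1 - ∑ k ∈ Ybar, η k) else 0)
    (hε : 0 < ε) (hε1 : ε < 1) (hε' : 0 < ε')
    (hε'lt : ε' < (η y - η b) * (η y - η a) / (8 * ε * (1 - ∑ j ∈ Ybar, η j)))
    (hagap : η y - η a ≤ 2 * ε)
    (φ : Fin c → ℝ)
    (happrox : ∀ j, |φ j - η' j| ≤ ε') :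
    ∀ j, j ≠ y → φ j < φ y :=
  stmt7_general η y Ybar a b ε ε' hnn hy hyY hlt hby hbmax η' hdef hε hε' hε'lt hagap φ happrox
end
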